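/- arXiv:2401.11495 — 2 statements merged into one kernel-verified Lean document; each statement's English description precedes it below -/
import Mathlib

section
/- Let φ(s) := (1+s)^{-3/2} · (2 + log(1+s))^{-1} for s ≥ 0. Then ∫₀^∞ √s · φ(s) ds = ∞, while Ψ₁(t)/√t → 0 as t → ∞, where Ψ₁(t) := ∫₀^t s φ(s) ds. In particular the condition Ψ₁(t)/√t → 0 is strictly weaker than the moment condition ∫₀^∞ √t φ(t)dt < ∞. -/
/-!
For `s ≥ 1`, `√s φ(s) ≥ ½ (1+s)⁻¹ (2 + log (1+s))⁻¹`, the derivative of the unbounded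
function `log (2 + log (1+s))`; so the half-moment diverges, but only at a doubly logarithmic
rate.

For the other half, `s φ(s) ≤ (1+s)^{-1/2} (2 + log (1+s))⁻¹` and the logarithmic factor is
decreasing, so splitting `∫₀^t` at `K` gives `Ψ₁(t) ≤ √K + 2√t / (2 + log (1+K))`. Thus
`limsup Ψ₁(t)/√t ≤ 2 / (2 + log (1+K))` for every `K`, and this bound tends to `0`.
-/

open MeasureTheory Real Filter Set Topology

lemma not_integrableOn_Ioi_of_hasDerivAt_of_tendsto_atTop {f f' : ℝ → ℝ} {a : ℝ}
    (hderiv : ∀ x ∈ Ioi a, HasDerivAt f (f' x) x) (hf : Tendsto f atTop atTop) :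
    ¬ IntegrableOn f' (Ioi a) := fun hint =>
  not_tendsto_nhds_of_tendsto_atTop hf _
    (tendsto_limUnder_of_hasDerivAt_of_integrableOn_Ioi hderiv hint)

namespace HalfMoment

noncomputable def logWeight (s : ℝ) : ℝ := (2 + log (1 + s))⁻¹

noncomputable def phi (s : ℝ) : ℝ := (1 + s) ^ (-(3 / 2) : ℝ) * logWeight s

lemma two_add_log_one_add_pos {s : ℝ} (hs : 0 ≤ s) : 0 < 2 + log (1 + s) := by
  have := log_nonneg (by linarith : (1 : ℝ) ≤ 1 + s)
  linarith

lemma logWeight_pos {s : ℝ} (hs : 0 ≤ s) : 0 < logWeight s :=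
  inv_pos.2 (two_add_log_one_add_pos hs)

lemma logWeight_antitoneOn : AntitoneOn logWeight (Ici 0) := fun a ha s _ has =>
  inv_anti₀ (two_add_log_one_add_pos ha) <| by
    gcongr
    linarith [mem_Ici.1 ha]

lemma tendsto_logWeight_atTop : Tendsto logWeight atTop (𝓝 0) :=
  tendsto_inv_atTop_zero.comp <| tendsto_atTop_add_const_left _ _ <|
    tendsto_log_atTop.comp <| tendsto_atTop_add_const_left _ _ tendsto_id

lemma continuousOn_logWeight : ContinuousOn logWeight (Ici 0) :=
  (continuousOn_const.add <| ContinuousOn.log (by fun_prop) fun x hx => by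
    simp only [mem_Ici] at hx; positivity).inv₀ fun x hx => (two_add_log_one_add_pos hx).ne'

lemma continuousOn_phi : ContinuousOn phi (Ici 0) :=
  (ContinuousOn.rpow_const (by fun_prop) fun x hx => Or.inl <| by
    simp only [mem_Ici] at hx; positivity).mul continuousOn_logWeight

lemma rpow_neg_three_halves {x : ℝ} (hx : 0 < x) : x ^ (-(3 / 2) : ℝ) = (x * √x)⁻¹ := by
  rw [rpow_neg hx.le, show (3 / 2 : ℝ) = 1 + 1 / 2 by norm_num, rpow_add hx, rpow_one,
    sqrt_eq_rpow]

lemma phi_eq {s : ℝ} (hs : 0 ≤ s) : phi s = ((1 + s) * √(1 + s))⁻¹ * logWeight s := by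
  rw [phi, rpow_neg_three_halves (by linarith)]

lemma phi_nonneg {s : ℝ} (hs : 0 ≤ s) : 0 ≤ phi s := by
  rw [phi_eq hs]
  have := logWeight_pos hs
  positivity

lemma mul_phi_le {s : ℝ} (hs : 0 ≤ s) : s * phi s ≤ (√(1 + s))⁻¹ * logWeight s := by
  have h1 : 0 < 1 + s := by linarith
  rw [phi_eq hs, ← mul_assoc]
  gcongr
  · exact (logWeight_pos hs).le
  · rw [mul_inv, ← mul_assoc, ← div_eq_mul_inv s]
    exact mul_le_of_le_one_left (by positivity) ((div_le_one h1).2 (by linarith))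

lemma hasDerivAt_log_two_add_log {s : ℝ} (hs : 0 ≤ s) :
    HasDerivAt (fun s => log (2 + log (1 + s))) ((1 + s)⁻¹ * logWeight s) s := by
  have h := ((((hasDerivAt_id s).const_add 1).log (by linarith : 0 < 1 + s).ne').const_add 2).log
    (two_add_log_one_add_pos hs).ne'
  simp only [id, one_div] at h
  convert h using 1
  rw [logWeight]
  ring

lemma tendsto_log_two_add_log_atTop : Tendsto (fun s => log (2 + log (1 + s))) atTop atTop :=
  tendsto_log_atTop.comp <| tendsto_atTop_add_const_left _ _ <|
    tendsto_log_atTop.comp <| tendsto_atTop_add_const_left _ _ tendsto_id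

lemma inv_one_add_mul_logWeight_le {s : ℝ} (hs : 1 ≤ s) :
    (1 + s)⁻¹ * logWeight s ≤ 2 * (√s * phi s) := by
  have h1 : 0 < 1 + s := by linarith
  have h2 : √(1 + s) ≤ 2 * √s := by
    rw [sqrt_le_left (by positivity), mul_pow, sq_sqrt (by linarith)]
    linarith
  have key : (1 + s)⁻¹ ≤ 2 * √s * ((1 + s) * √(1 + s))⁻¹ := by
    rw [← div_eq_mul_inv, le_div_iff₀ (by positivity), inv_mul_cancel_left₀ h1.ne']
    exact h2
  have := logWeight_pos (by linarith : (0 : ℝ) ≤ s)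
  calc (1 + s)⁻¹ * logWeight s
      ≤ 2 * √s * ((1 + s) * √(1 + s))⁻¹ * logWeight s := by gcongr
    _ = 2 * (√s * phi s) := by rw [phi_eq (by linarith)]; ring

lemma not_integrableOn_sqrt_mul_phi : ¬ IntegrableOn (fun s => √s * phi s) (Ioi 0) := by
  intro hint
  refine not_integrableOn_Ioi_of_hasDerivAt_of_tendsto_atTop (a := 1)
    (fun s hs => hasDerivAt_log_two_add_log (zero_le_one.trans (le_of_lt hs)))
    tendsto_log_two_add_log_atTop ?_
  refine ((hint.mono_set (Ioi_subset_Ioi zero_le_one)).const_mul 2).mono'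
    (by unfold logWeight; fun_prop) ?_
  filter_upwards [ae_restrict_mem measurableSet_Ioi] with s hs
  have hs : 1 ≤ s := le_of_lt hs
  rw [norm_of_nonneg (by have := logWeight_pos (zero_le_one.trans hs); positivity)]
  exact inv_one_add_mul_logWeight_le hs

lemma intervalIntegrable_inv_sqrt_one_add {a b : ℝ} (ha : -1 < a) (hb : -1 < b) :
    IntervalIntegrable (fun s => (√(1 + s))⁻¹) volume a b :=
  (ContinuousOn.inv₀ (by fun_prop) fun s hs => (sqrt_pos.2 <| by
    have := ordConnected_Ioi.uIcc_subset (mem_Ioi.2 ha) (mem_Ioi.2 hb) hs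
    linarith [mem_Ioi.1 this]).ne').intervalIntegrable

lemma integral_inv_sqrt_one_add {a b : ℝ} (ha : -1 < a) (hb : -1 < b) :
    ∫ s in a..b, (√(1 + s))⁻¹ = 2 * (√(1 + b) - √(1 + a)) := by
  have hderiv : ∀ s ∈ uIcc a b, HasDerivAt (fun s => 2 * √(1 + s)) (√(1 + s))⁻¹ s := by
    intro s hs
    have hpos : 0 < 1 + s := by
      linarith [mem_Ioi.1 (ordConnected_Ioi.uIcc_subset (mem_Ioi.2 ha) (mem_Ioi.2 hb) hs)]
    refine ((((hasDerivAt_id s).const_add 1).sqrt hpos.ne').const_mul 2).congr_deriv ?_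
    have := (sqrt_pos.2 hpos).ne'
    simp only [id]
    field_simp
  rw [intervalIntegral.integral_eq_sub_of_hasDerivAt hderiv
    (intervalIntegrable_inv_sqrt_one_add ha hb), mul_sub]

lemma intervalIntegrable_mul_phi {a b : ℝ} (ha : 0 ≤ a) (hb : 0 ≤ b) :
    IntervalIntegrable (fun s => s * phi s) volume a b :=
  ((continuousOn_id.mul continuousOn_phi).mono
    (ordConnected_Ici.uIcc_subset (mem_Ici.2 ha) (mem_Ici.2 hb))).intervalIntegrable

lemma integral_mul_phi_le {a b : ℝ} (ha : 0 ≤ a) (hab : a ≤ b) :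
    ∫ s in a..b, s * phi s ≤ 2 * logWeight a * √b := by
  calc ∫ s in a..b, s * phi s
      ≤ ∫ s in a..b, (√(1 + s))⁻¹ * logWeight a := by
        refine intervalIntegral.integral_mono_on hab (intervalIntegrable_mul_phi ha (ha.trans hab))
          ((intervalIntegrable_inv_sqrt_one_add (by linarith) (by linarith)).mul_const _)
          fun s hs => (mul_phi_le (ha.trans hs.1)).trans ?_
        gcongr
        exact logWeight_antitoneOn ha (mem_Ici.2 (ha.trans hs.1)) hs.1
    _ = 2 * logWeight a * (√(1 + b) - √(1 + a)) := by
        rw [intervalIntegral.integral_mul_const, integral_inv_sqrt_one_add (by linarith)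
          (by linarith)]
        ring
    _ ≤ 2 * logWeight a * √b := by
        have := logWeight_pos ha
        gcongr
        have h1 : 1 ≤ √(1 + a) := one_le_sqrt.2 (by linarith)
        have h2 : √(1 + b) ≤ 1 + √b := by
          rw [sqrt_le_left (by positivity)]
          nlinarith [sq_sqrt (by linarith : (0 : ℝ) ≤ b), sqrt_nonneg b]
        linarith

lemma integral_mul_phi_le_sqrt_add {K t : ℝ} (hK : 0 ≤ K) (hKt : K ≤ t) :
    ∫ s in (0 : ℝ)..t, s * phi s ≤ √K + 2 * logWeight K * √t := by
  rw [← intervalIntegral.integral_add_adjacent_intervals (intervalIntegrable_mul_phi le_rfl hK)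
    (intervalIntegrable_mul_phi hK (hK.trans hKt))]
  have h0 : 2 * logWeight 0 = 1 := by norm_num [logWeight]
  have := integral_mul_phi_le le_rfl hK
  rw [h0, one_mul] at this
  linarith [integral_mul_phi_le hK hKt]

lemma tendsto_integral_mul_phi_div_sqrt :
    Tendsto (fun t => (∫ s in (0 : ℝ)..t, s * phi s) / √t) atTop (𝓝 0) := by
  refine tendsto_order.2 ⟨fun a ha => ?_, fun ε hε => ?_⟩
  · filter_upwards [eventually_ge_atTop 0] with t ht
    exact ha.trans_le <| div_nonneg (intervalIntegral.integral_nonneg ht fun s hs =>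
      mul_nonneg hs.1 (phi_nonneg hs.1)) (sqrt_nonneg t)
  obtain ⟨K, hKε, hK⟩ : ∃ K, 2 * logWeight K < ε / 2 ∧ 0 ≤ K :=
    (((tendsto_logWeight_atTop.const_mul 2).eventually
      (gt_mem_nhds (by simpa using half_pos hε))).and (eventually_ge_atTop 0)).exists
  have hsqrt : Tendsto (fun t => √K / √t) atTop (𝓝 0) :=
    tendsto_const_nhds.div_atTop tendsto_sqrt_atTop
  filter_upwards [hsqrt.eventually (gt_mem_nhds (half_pos hε)), eventually_gt_atTop K]
    with t hsmall htK
  have ht : 0 < √t := sqrt_pos.2 (hK.trans_lt htK)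
  calc (∫ s in (0 : ℝ)..t, s * phi s) / √t
      ≤ (√K + 2 * logWeight K * √t) / √t := by
        gcongr
        exact integral_mul_phi_le_sqrt_add hK htK.le
    _ = √K / √t + 2 * logWeight K := by field_simp
    _ < ε := by linarith

end HalfMoment

/-- For `φ(s) = (1+s)^{-3/2}(2+log(1+s))^{-1}` the half-moment `∫₀^∞ √s φ(s)ds`
diverges, while `Ψ₁(t)/√t → 0` as `t → ∞`, where `Ψ₁(t) = ∫₀^t sφ(s)ds`. -/
theorem counterexample_half_moment :
    (¬ IntegrableOn
        (fun s => Real.sqrt s * ((1+s) ^ (-(3/2) : ℝ) * (2 + Real.log (1+s))⁻¹))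
        (Set.Ioi 0))
    ∧ Tendsto
        (fun t => (∫ s in (0:ℝ)..t, s * ((1+s) ^ (-(3/2) : ℝ) * (2 + Real.log (1+s))⁻¹))
          / Real.sqrt t)
        atTop (nhds 0) :=
  ⟨HalfMoment.not_integrableOn_sqrt_mul_phi, HalfMoment.tendsto_integral_mul_phi_div_sqrt⟩
end

section
/- Let σ > 0, w a finite complex measure on ℝ₊ with Re values in (−∞,0], and g : ℝ₊ → iℝ locally bounded. If V* solves the Riccati-type integral equation V*(t) = 𝓘_w(t)/σ + (1/(2σ))∫₀^t (V*(s)+g(s))² ds with w a nonpositive real measure and g ≡ 0, then 𝓘_w(t)/σ ≤ V*(t) ≤ 0 for all t ≥ 0, where 𝓘_w(t) := w([0,t]). -/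
open MeasureTheory Set

/-!
The lower bound is immediate since the integral term is nonnegative. For the upper bound, the
measure term is nonincreasing in `t`, so `V t - V s ≤ (1/(2σ)) ∫ₛᵗ V²` for `s ≤ t`: `V` is a
subsolution of `V' = V² / (2σ)` starting from `V 0 ≤ 0`. If `V` became positive, then after its
last zero `τ` we would have `0 ≤ V ≤ C` and hence `V t ≤ (C/(2σ)) ∫_τ^t V`, which forces `V = 0`
by Grönwall's inequality applied to `t ↦ ∫_τ^t V`.
-/

theorem eq_zero_of_nonneg_of_le_mul_integral {u : ℝ → ℝ} {K a b : ℝ} (hu : Continuous u)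
    (hnonneg : ∀ x ∈ Icc a b, 0 ≤ u x) (hle : ∀ x ∈ Icc a b, u x ≤ K * ∫ s in a..x, u s) :
    ∀ x ∈ Icc a b, u x = 0 := by
  have hprim_zero : ∀ x ∈ Icc a b, ∫ s in a..x, u s = 0 := by
    refine eq_zero_of_abs_deriv_le_mul_abs_self_of_eq_zero_right (K := |K|)
      (fun x _ => (hu.integral_hasStrictDerivAt a x).hasDerivAt.continuousAt.continuousWithinAt)
      (fun x _ => (hu.integral_hasStrictDerivAt a x).hasDerivAt.hasDerivWithinAt)
      intervalIntegral.integral_same fun x hx => ?_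
    have hx' : x ∈ Icc a b := Ico_subset_Icc_self hx
    calc ‖u x‖ = u x := abs_of_nonneg (hnonneg x hx')
      _ ≤ K * ∫ s in a..x, u s := hle x hx'
      _ ≤ |K * ∫ s in a..x, u s| := le_abs_self _
      _ = |K| * ‖∫ s in a..x, u s‖ := abs_mul _ _
  intro x hx
  refine le_antisymm ?_ (hnonneg x hx)
  simpa [hprim_zero x hx] using hle x hx

theorem nonpos_of_sub_le_mul_integral_sq {u : ℝ → ℝ} {L a : ℝ} (hu : Continuous u)
    (hL : 0 ≤ L) (ha : u a ≤ 0)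
    (hsub : ∀ s t, a ≤ s → s ≤ t → u t - u s ≤ L * ∫ r in s..t, u r ^ 2) :
    ∀ t ≥ a, u t ≤ 0 := by
  intro t₁ ht₁
  by_contra! hpos
  set S := Icc a t₁ ∩ u ⁻¹' Iic 0
  have hS : IsCompact S := isCompact_Icc.inter_right (isClosed_Iic.preimage hu)
  set τ := sSup S
  obtain ⟨⟨haτ, hτt₁⟩, hτ : u τ ≤ 0⟩ : τ ∈ S := hS.sSup_mem ⟨a, ⟨le_rfl, ht₁⟩, ha⟩
  replace hτt₁ : τ < t₁ := hτt₁.lt_of_ne fun h => by rw [h] at hτ; exact hτ.not_gt hpos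
  have hpos_after : Ioc τ t₁ ⊆ {s | 0 ≤ u s} := fun s hs => by
    show 0 ≤ u s
    by_contra! h
    exact hs.1.not_ge (le_csSup hS.bddAbove ⟨⟨haτ.trans hs.1.le, hs.2⟩, h.le⟩)
  have hnonneg : ∀ s ∈ Icc τ t₁, 0 ≤ u s := by
    rw [← closure_Ioc hτt₁.ne]
    exact ((isClosed_le continuous_const hu).closure_subset_iff.mpr hpos_after)
  obtain ⟨C, hC⟩ := isCompact_Icc.exists_bound_of_continuousOn (hu.continuousOn (s := Icc τ t₁))
  have hlin : ∀ t ∈ Icc τ t₁, u t ≤ L * C * ∫ r in τ..t, u r := by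
    intro t ht
    have hsq_le : ∫ r in τ..t, u r ^ 2 ≤ ∫ r in τ..t, C * u r := by
      refine intervalIntegral.integral_mono_on ht.1 ((hu.pow 2).intervalIntegrable _ _)
        ((continuous_const.mul hu).intervalIntegrable _ _) fun r hr => ?_
      have hr' : r ∈ Icc τ t₁ := ⟨hr.1, hr.2.trans ht.2⟩
      have hrC : u r ≤ C := (le_abs_self _).trans (hC r hr')
      nlinarith [hnonneg r hr']
    calc u t ≤ u τ + L * ∫ r in τ..t, u r ^ 2 := by linarith [hsub τ t haτ ht.1]
      _ ≤ L * ∫ r in τ..t, C * u r := by linarith [mul_le_mul_of_nonneg_left hsq_le hL]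
      _ = L * C * ∫ r in τ..t, u r := by rw [intervalIntegral.integral_const_mul, mul_assoc]
  have := eq_zero_of_nonneg_of_le_mul_integral hu hnonneg hlin t₁ ⟨hτt₁.le, le_rfl⟩
  linarith

/-- For a nonpositive measure `w = -μ` (with `μ` a finite measure) and the Riccati
equation `V(t) = 𝓘_w(t)/σ + (1/(2σ))∫₀^t V(s)²ds` (case `g ≡ 0`), the solution
satisfies `𝓘_w(t)/σ ≤ V(t) ≤ 0` for all `t ≥ 0`, where `𝓘_w(t) = w([0,t])`. -/
theorem riccati_solution_bounds
    (σ : ℝ) (hσ : 0 < σ)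
    (μ : Measure ℝ) [IsFiniteMeasure μ]
    (V : ℝ → ℝ) (hV : Continuous V)
    (heq : ∀ t ≥ (0:ℝ),
      V t = (-(μ (Set.Icc 0 t)).toReal) / σ + (1/(2*σ)) * ∫ s in (0:ℝ)..t, (V s)^2) :
    ∀ t ≥ (0:ℝ), (-(μ (Set.Icc 0 t)).toReal) / σ ≤ V t ∧ V t ≤ 0 := by
  have hL : 0 ≤ 1 / (2 * σ) := by positivity
  have hforcing_anti : ∀ s t, s ≤ t →
      (-(μ (Icc 0 t)).toReal) / σ ≤ (-(μ (Icc 0 s)).toReal) / σ := fun s t hst => by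
    gcongr
    exact measure_ne_top μ _
  have hV0 : V 0 ≤ 0 := by
    rw [heq 0 le_rfl, intervalIntegral.integral_same, mul_zero, add_zero]
    exact div_nonpos_of_nonpos_of_nonneg (neg_nonpos.mpr ENNReal.toReal_nonneg) hσ.le
  have hsub : ∀ s t, 0 ≤ s → s ≤ t → V t - V s ≤ 1 / (2 * σ) * ∫ r in s..t, V r ^ 2 := by
    intro s t hs hst
    have hint : ∀ b, IntervalIntegrable (fun r => V r ^ 2) volume 0 b :=
      fun b => (hV.pow 2).intervalIntegrable 0 b
    rw [heq t (hs.trans hst), heq s hs, ← intervalIntegral.integral_interval_sub_left (hint t)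
      (hint s)]
    linarith [hforcing_anti s t hst]
  intro t ht
  refine ⟨?_, nonpos_of_sub_le_mul_integral_sq hV hL hV0 hsub t ht⟩
  rw [heq t ht]
  exact le_add_of_nonneg_right
    (mul_nonneg hL (intervalIntegral.integral_nonneg ht fun s _ => sq_nonneg _))
end
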